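/- arXiv:1901.05404 — 2 statements merged into one kernel-verified Lean document; each statement's English description precedes it below -/
import Mathlib

section
/- Let q ∈ ℕ with q ≥ 1 and let s be a real number with 0 ≤ s ≤ 2q+1. With ℓ_k = (k+1)^{−s}, the limit lim_{n→∞} (Σ_{k=0}^n (k+1)^q (k+2)^q (k+1)^{−s})·(Σ_{k=n}^∞ (k+1)^{−s}/((k+1)^q (k+2)^q)) (tail sums and products taken in [0,∞]) equals 0 if and only if s > 1. -/
open Filter Topology Finset
open scoped ENNReal

/-!
Write `a_k = s_k s_{k+1} ℓ_k` and `b_k = ℓ_k / (s_k s_{k+1})`. Both are antitone in `s`, so it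
suffices to bound the product from above for `s ∈ (1, 2]` and from below at `s = 1`.
For the upper bound, `Σ_{k ≤ n} a_k ≤ 2^q (n+1)^{2q+1-s}` termwise, while for `k ≥ n`
`b_k ≤ (n+1)^{2-2q-s} / ((k+1)(k+2))` and the tail telescopes, so the product is
`O(n^{2-2s}) → 0`. At `s = 1`, the terms of the head with `k ≥ n/2` give
`Σ_{k ≤ n} a_k ≳ n^{2q}` and the first `n+1` terms of the tail give `Σ_{k ≥ n} b_k ≳ n^{-2q}`,
so the product stays above `2^{-(4q+2)}`.
-/

namespace PolynomialAntitree

/- At `x = k + 1` these are `s_k s_{k+1} ℓ_k` and `ℓ_k / (s_k s_{k+1})` for `s_k = (k+1)^q`,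
`ℓ_k = (k+1)^{-s}`. -/
noncomputable def mass (q : ℕ) (s x : ℝ) : ℝ := x ^ q * (x + 1) ^ q * x ^ (-s)

noncomputable def resistance (q : ℕ) (s x : ℝ) : ℝ := x ^ (-s) / (x ^ q * (x + 1) ^ q)

noncomputable def headSum (q : ℕ) (s : ℝ) (n : ℕ) : ℝ≥0∞ :=
  ∑ k ∈ range (n + 1), ENNReal.ofReal (mass q s (k + 1))

noncomputable def tailSum (q : ℕ) (s : ℝ) (n : ℕ) : ℝ≥0∞ :=
  ∑' k : ℕ, ENNReal.ofReal (resistance q s (n + k + 1))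

variable (q : ℕ) {s t w x y z : ℝ}

lemma mass_nonneg (hx : 0 ≤ x) : 0 ≤ mass q s x := by unfold mass; positivity

lemma resistance_nonneg (hx : 0 ≤ x) : 0 ≤ resistance q s x := by unfold resistance; positivity

lemma mass_le_mass (hx : 1 ≤ x) (hts : t ≤ s) : mass q s x ≤ mass q t x := by
  unfold mass; gcongr

lemma resistance_le_resistance (hx : 1 ≤ x) (hts : t ≤ s) :
    resistance q s x ≤ resistance q t x := by
  unfold resistance; gcongr

lemma antitone_headSum (n : ℕ) : Antitone fun s => headSum q s n := fun t s hts => by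
  refine sum_le_sum fun k _ => ENNReal.ofReal_le_ofReal ?_
  exact mass_le_mass q (by simp) hts

lemma antitone_tailSum (n : ℕ) : Antitone fun s => tailSum q s n := fun t s hts => by
  refine ENNReal.tsum_le_tsum fun k => ENNReal.ofReal_le_ofReal ?_
  exact resistance_le_resistance q (le_add_of_nonneg_left (by positivity)) hts

lemma headSum_eq (n : ℕ) :
    headSum q s n = ENNReal.ofReal (∑ k ∈ range (n + 1), mass q s (k + 1)) :=
  (ENNReal.ofReal_sum_of_nonneg fun k _ => mass_nonneg q (by positivity)).symm

lemma rpow_two_mul_natCast (x : ℝ) : x ^ (2 * (q : ℝ)) = x ^ q * x ^ q := by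
  rw [show 2 * (q : ℝ) = ((q + q : ℕ) : ℝ) by push_cast; ring, Real.rpow_natCast, pow_add]

lemma mass_le (hq : 1 ≤ q) (hs : s ≤ 2) (hx : 1 ≤ x) (hxy : x ≤ y) :
    mass q s x ≤ 2 ^ q * y ^ (2 * q - s) := by
  have hq' : (1 : ℝ) ≤ q := by exact_mod_cast hq
  calc mass q s x ≤ x ^ q * (2 * x) ^ q * x ^ (-s) := by unfold mass; gcongr; linarith
    _ = 2 ^ q * x ^ (2 * q - s) := by
      rw [sub_eq_add_neg, Real.rpow_add (by linarith), rpow_two_mul_natCast]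
      ring
    _ ≤ 2 ^ q * y ^ (2 * q - s) := by gcongr; linarith

lemma headSum_le (hq : 1 ≤ q) (hs : s ≤ 2) (n : ℕ) :
    headSum q s n ≤ ENNReal.ofReal (2 ^ q * ((n : ℝ) + 1) ^ (2 * q + 1 - s)) := by
  rw [headSum_eq]
  refine ENNReal.ofReal_le_ofReal ?_
  calc ∑ k ∈ range (n + 1), mass q s (k + 1)
      ≤ (range (n + 1)).card • (2 ^ q * ((n : ℝ) + 1) ^ (2 * q - s)) := by
        refine sum_le_card_nsmul _ _ _ fun k hk => mass_le q hq hs (by simp) ?_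
        have : k ≤ n := Nat.lt_succ_iff.mp (mem_range.mp hk)
        exact_mod_cast Nat.succ_le_succ this
    _ = 2 ^ q * ((n : ℝ) + 1) ^ (2 * q + 1 - s) := by
        rw [card_range, nsmul_eq_mul, show 2 * (q : ℝ) + 1 - s = 2 * q - s + 1 by ring,
          Real.rpow_add_one (by positivity)]
        push_cast
        ring

lemma resistance_le (hq : 1 ≤ q) (hs : 0 ≤ s) (hy : 0 < y) (hxy : y ≤ x) :
    resistance q s x ≤ y ^ (2 - 2 * q - s) * (x⁻¹ - (x + 1)⁻¹) := by
  have hq' : (1 : ℝ) ≤ q := by exact_mod_cast hq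
  have hx : 0 < x := hy.trans_le hxy
  obtain ⟨m, rfl⟩ : ∃ m, q = m + 1 := ⟨q - 1, by omega⟩
  calc resistance (m + 1) s x = x ^ (-s) / (x ^ m * (x + 1) ^ m) * (x⁻¹ - (x + 1)⁻¹) := by
        unfold resistance
        field_simp
        ring
    _ ≤ x ^ (-s) / (x ^ m * x ^ m) * (x⁻¹ - (x + 1)⁻¹) := by
        have : (x + 1)⁻¹ ≤ x⁻¹ := inv_anti₀ hx (by linarith)
        gcongr
        linarith
    _ = x ^ (2 - 2 * ((m + 1 : ℕ) : ℝ) - s) * (x⁻¹ - (x + 1)⁻¹) := by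
        rw [show 2 - 2 * ((m + 1 : ℕ) : ℝ) - s = -s - 2 * m by push_cast; ring,
          Real.rpow_sub hx, rpow_two_mul_natCast]
    _ ≤ y ^ (2 - 2 * ((m + 1 : ℕ) : ℝ) - s) * (x⁻¹ - (x + 1)⁻¹) := by
        have : (x + 1)⁻¹ ≤ x⁻¹ := inv_anti₀ hx (by linarith)
        exact mul_le_mul_of_nonneg_right
          (Real.rpow_le_rpow_of_nonpos hy hxy (by push_cast; linarith)) (by linarith)

lemma tailSum_le (hq : 1 ≤ q) (hs : 0 ≤ s) (n : ℕ) :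
    tailSum q s n ≤ ENNReal.ofReal (((n : ℝ) + 1) ^ (1 - 2 * q - s)) := by
  set f : ℕ → ℝ := fun k => ((n : ℝ) + k + 1)⁻¹ with hf
  refine ENNReal.tsum_le_of_sum_range_le fun N => ?_
  rw [← ENNReal.ofReal_sum_of_nonneg fun k _ => resistance_nonneg q (by positivity)]
  refine ENNReal.ofReal_le_ofReal ?_
  calc ∑ k ∈ range N, resistance q s (n + k + 1)
      ≤ ∑ k ∈ range N, ((n : ℝ) + 1) ^ (2 - 2 * q - s) * (f k - f (k + 1)) := by
        refine sum_le_sum fun k _ => ?_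
        have h := resistance_le q hq hs (x := n + k + 1) (y := n + 1) (by positivity)
          (by simp)
        simpa only [hf, Nat.cast_succ, ← add_assoc] using h
    _ = ((n : ℝ) + 1) ^ (2 - 2 * q - s) * (f 0 - f N) := by rw [← mul_sum, sum_range_sub']
    _ ≤ ((n : ℝ) + 1) ^ (2 - 2 * q - s) / (n + 1) := by
        rw [div_eq_mul_inv]
        gcongr
        simp [hf]
        positivity
    _ = ((n : ℝ) + 1) ^ (1 - 2 * q - s) := by
        rw [← Real.rpow_sub_one (by positivity)]
        ring_nf

lemma headSum_mul_tailSum_le (hq : 1 ≤ q) (hs₀ : 0 ≤ s) (hs₂ : s ≤ 2) (n : ℕ) :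
    headSum q s n * tailSum q s n ≤ ENNReal.ofReal (2 ^ q * ((n : ℝ) + 1) ^ (2 - 2 * s)) := by
  calc headSum q s n * tailSum q s n
      ≤ ENNReal.ofReal (2 ^ q * ((n : ℝ) + 1) ^ (2 * q + 1 - s)) *
          ENNReal.ofReal (((n : ℝ) + 1) ^ (1 - 2 * q - s)) :=
        mul_le_mul' (headSum_le q hq hs₂ n) (tailSum_le q hq hs₀ n)
    _ = ENNReal.ofReal (2 ^ q * ((n : ℝ) + 1) ^ (2 - 2 * s)) := by
        rw [← ENNReal.ofReal_mul (by positivity), mul_assoc, ← Real.rpow_add (by positivity)]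
        ring_nf

lemma tendsto_headSum_mul_tailSum (hq : 1 ≤ q) (hs : 1 < s) :
    Tendsto (fun n => headSum q s n * tailSum q s n) atTop (𝓝 0) := by
  set t := min s 2
  have hbound (n : ℕ) :
      headSum q s n * tailSum q s n ≤ ENNReal.ofReal (2 ^ q * ((n : ℝ) + 1) ^ (2 - 2 * t)) :=
    (mul_le_mul' (antitone_headSum q n (min_le_left s 2))
      (antitone_tailSum q n (min_le_left s 2))).trans
        (headSum_mul_tailSum_le q hq (by positivity) (min_le_right s 2) n)
  have hpow : Tendsto (fun n : ℕ => ((n : ℝ) + 1) ^ (2 - 2 * t)) atTop (𝓝 0) := by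
    have ht1 : 1 < t := lt_min hs one_lt_two
    simpa [Function.comp_def, neg_sub] using
      (tendsto_rpow_neg_atTop (y := 2 * t - 2) (by linarith)).comp
        (tendsto_atTop_add_const_right _ 1 tendsto_natCast_atTop_atTop)
  have hlim := ENNReal.tendsto_ofReal (hpow.const_mul (2 ^ q))
  rw [mul_zero, ENNReal.ofReal_zero] at hlim
  exact tendsto_of_tendsto_of_tendsto_of_le_of_le tendsto_const_nhds hlim (fun _ => zero_le) hbound

lemma le_mass_one (hw : 0 < w) (hwx : w ≤ x) (hxz : x ≤ z) :
    w ^ (2 * q) / z ≤ mass q 1 x := by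
  have hx : 0 < x := hw.trans_le hwx
  calc w ^ (2 * q) / z ≤ x ^ (2 * q) / x := by gcongr
    _ ≤ mass q 1 x := by
      rw [mass, Real.rpow_neg_one, two_mul, pow_add, ← div_eq_mul_inv]
      gcongr
      linarith

lemma le_resistance_one (hx : 0 < x) (hxz : x + 1 ≤ z) :
    (z ^ (2 * q + 1))⁻¹ ≤ resistance q 1 x := by
  calc (z ^ (2 * q + 1))⁻¹ ≤ ((x + 1) ^ (2 * q + 1))⁻¹ := by gcongr
    _ = ((x + 1) * (x + 1) ^ q * (x + 1) ^ q)⁻¹ := by ring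
    _ ≤ (x * x ^ q * (x + 1) ^ q)⁻¹ := by gcongr <;> linarith
    _ = resistance q 1 x := by
      rw [resistance, Real.rpow_neg_one]
      field_simp

lemma le_headSum_one (n : ℕ) :
    ENNReal.ofReal ((((n : ℝ) + 1) / 2) ^ (2 * q) / 2) ≤ headSum q 1 n := by
  set w : ℝ := ((n : ℝ) + 1) / 2 with hw
  have hcard : w ≤ (Icc (n / 2) n).card := by
    have : n + 1 ≤ 2 * (Icc (n / 2) n).card := by rw [Nat.card_Icc]; omega
    have : (n : ℝ) + 1 ≤ 2 * (Icc (n / 2) n).card := by exact_mod_cast this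
    linarith
  rw [headSum_eq]
  refine ENNReal.ofReal_le_ofReal ?_
  calc w ^ (2 * q) / 2 = w * (w ^ (2 * q) / (n + 1)) := by rw [hw]; field_simp
    _ ≤ (Icc (n / 2) n).card • (w ^ (2 * q) / (n + 1)) := by
        rw [nsmul_eq_mul]
        gcongr
    _ ≤ ∑ k ∈ Icc (n / 2) n, mass q 1 (k + 1) := by
        refine card_nsmul_le_sum _ _ _ fun k hk => le_mass_one q (by positivity) ?_ ?_
        · have : n + 1 ≤ 2 * (k + 1) := by have := (mem_Icc.mp hk).1; omega
          have : (n : ℝ) + 1 ≤ 2 * ((k : ℝ) + 1) := by exact_mod_cast this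
          linarith
        · exact_mod_cast Nat.succ_le_succ (mem_Icc.mp hk).2
    _ ≤ ∑ k ∈ range (n + 1), mass q 1 (k + 1) :=
        sum_le_sum_of_subset_of_nonneg
          (fun k hk => mem_range.mpr (Nat.lt_succ_of_le (mem_Icc.mp hk).2))
          fun k _ _ => mass_nonneg q (by positivity)

lemma le_tailSum_one (n : ℕ) :
    ENNReal.ofReal (((n : ℝ) + 1) / (2 * ((n : ℝ) + 1)) ^ (2 * q + 1)) ≤ tailSum q 1 n := by
  calc ENNReal.ofReal (((n : ℝ) + 1) / (2 * ((n : ℝ) + 1)) ^ (2 * q + 1))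
      ≤ ENNReal.ofReal (∑ k ∈ range (n + 1), resistance q 1 (n + k + 1)) := by
        refine ENNReal.ofReal_le_ofReal ?_
        calc ((n : ℝ) + 1) / (2 * ((n : ℝ) + 1)) ^ (2 * q + 1)
            = (range (n + 1)).card • ((2 * ((n : ℝ) + 1)) ^ (2 * q + 1))⁻¹ := by
              rw [card_range, nsmul_eq_mul, div_eq_mul_inv]
              push_cast
              ring
          _ ≤ ∑ k ∈ range (n + 1), resistance q 1 (n + k + 1) := by
              refine card_nsmul_le_sum _ _ _ fun k hk => le_resistance_one q (by positivity) ?_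
              have : (k : ℝ) ≤ n := by exact_mod_cast Nat.lt_succ_iff.mp (mem_range.mp hk)
              linarith
    _ = ∑ k ∈ range (n + 1), ENNReal.ofReal (resistance q 1 (n + k + 1)) :=
        ENNReal.ofReal_sum_of_nonneg fun k _ => resistance_nonneg q (by positivity)
    _ ≤ tailSum q 1 n := ENNReal.sum_le_tsum _

lemma le_headSum_mul_tailSum (hs : s ≤ 1) (n : ℕ) :
    ENNReal.ofReal (2 ^ (4 * q + 2))⁻¹ ≤ headSum q s n * tailSum q s n := by
  calc ENNReal.ofReal (2 ^ (4 * q + 2))⁻¹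
      = ENNReal.ofReal ((((n : ℝ) + 1) / 2) ^ (2 * q) / 2) *
          ENNReal.ofReal (((n : ℝ) + 1) / (2 * ((n : ℝ) + 1)) ^ (2 * q + 1)) := by
        rw [← ENNReal.ofReal_mul (by positivity)]
        congr 1
        rw [div_pow, mul_pow]
        field_simp
        ring
    _ ≤ headSum q 1 n * tailSum q 1 n := mul_le_mul' (le_headSum_one q n) (le_tailSum_one q n)
    _ ≤ headSum q s n * tailSum q s n :=
        mul_le_mul' (antitone_headSum q n hs) (antitone_tailSum q n hs)

lemma not_tendsto_headSum_mul_tailSum (hs : s ≤ 1) :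
    ¬Tendsto (fun n => headSum q s n * tailSum q s n) atTop (𝓝 0) := fun h => by
  have hpos : (0 : ℝ≥0∞) < ENNReal.ofReal (2 ^ (4 * q + 2))⁻¹ :=
    ENNReal.ofReal_pos.mpr (by positivity)
  obtain ⟨n, hn⟩ := (h.eventually (gt_mem_nhds hpos)).exists
  exact (hn.trans_le (le_headSum_mul_tailSum q hs n)).false

lemma tendsto_headSum_mul_tailSum_iff (hq : 1 ≤ q) :
    Tendsto (fun n => headSum q s n * tailSum q s n) atTop (𝓝 0) ↔ 1 < s :=
  ⟨fun h => not_le.mp fun hs => not_tendsto_headSum_mul_tailSum q hs h,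
    tendsto_headSum_mul_tailSum q hq⟩

end PolynomialAntitree

theorem polynomial_antitree_discrete_iff_general (q : ℕ) (hq : 1 ≤ q)
    (s : ℝ) :
    Tendsto
      (fun n : ℕ =>
        (∑ k ∈ Finset.range (n + 1),
            ENNReal.ofReal
              (((k : ℝ) + 1) ^ q * ((k : ℝ) + 2) ^ q * ((k : ℝ) + 1) ^ (-s))) *
          ∑' k : ℕ,
            ENNReal.ofReal
              (((n : ℝ) + (k : ℝ) + 1) ^ (-s) /
                (((n : ℝ) + (k : ℝ) + 1) ^ q * ((n : ℝ) + (k : ℝ) + 2) ^ q)))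
      atTop (𝓝 0) ↔ 1 < s := by
  simpa only [PolynomialAntitree.headSum, PolynomialAntitree.tailSum, PolynomialAntitree.mass,
    PolynomialAntitree.resistance, add_assoc, one_add_one_eq_two]
    using PolynomialAntitree.tendsto_headSum_mul_tailSum_iff q hq

/-- Corollary 10.6(ii).  For the antitree `A^q` with
`sₙ = (n+1)^q` and `ℓₖ = (k+1)^{−s}`, `0 ≤ s ≤ 2q+1`, the quantity
`(Σ_{k ≤ n} (k+1)^q (k+2)^q (k+1)^{−s})(Σ_{k ≥ n} (k+1)^{−s}/((k+1)^q(k+2)^q))`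
tends to `0` iff `s > 1`. -/
theorem polynomial_antitree_discrete_iff (q : ℕ) (hq : 1 ≤ q)
    (s : ℝ) (hs0 : 0 ≤ s) (hs1 : s ≤ 2 * (q : ℝ) + 1) :
    Tendsto
      (fun n : ℕ =>
        (∑ k ∈ Finset.range (n + 1),
            ENNReal.ofReal
              (((k : ℝ) + 1) ^ q * ((k : ℝ) + 2) ^ q * ((k : ℝ) + 1) ^ (-s))) *
          ∑' k : ℕ,
            ENNReal.ofReal
              (((n : ℝ) + (k : ℝ) + 1) ^ (-s) /
                (((n : ℝ) + (k : ℝ) + 1) ^ q * ((n : ℝ) + (k : ℝ) + 2) ^ q)))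
      atTop (𝓝 0) ↔ 1 < s :=
  polynomial_antitree_discrete_iff_general q hq s
end

section
/- Let q ∈ ℕ with q ≥ 1 and let s be a real number with 0 ≤ s ≤ 2q+1. With ℓ_k = (k+1)^{−s}, one has sup_{n ∈ ℕ} (Σ_{k=0}^n (k+1)^q (k+2)^q (k+1)^{−s})·(Σ_{k=n}^∞ (k+1)^{−s}/((k+1)^q (k+2)^q)) < ∞ (tail sums and products taken in [0,∞]) if and only if s ≥ 1. -/
open Filter Topology
open scoped ENNReal

/-!
Write `x = k + 1` and `y = m + 1`. The product of the `k`-th volume term and the `m`-th resistance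
term factors as `(x (x+1) / (y (y+1)))^q · (x y)^{-s}`. For `k ≤ m` and `s ≥ 1` this is at most
`2 / (y (y+1))`, which telescopes over `m ≥ n`, so each of the `n + 1` head terms contributes at
most `2 / (n+1)` and the product is at most `2`. For `s < 1`, the `(n+1)²` pairs with
`n ≤ k ≤ 2n ≤ m ≤ 3n` each contribute a multiple of `(n+1)^{-2s}`, so the product at `2n` grows
like `(n+1)^{2-2s}`.
-/

noncomputable section

open Finset

/-- With `x = k + 1`, the `k`-th layer of `A^q` joins the `x^q` vertices of sphere `k` to the
`(x+1)^q` vertices of sphere `k + 1` by edges of length `x^{-s}`: `layerVolume` is its total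
length and, the edges being in parallel, `layerResistance` is its resistance. -/
def layerVolume (q : ℕ) (s x : ℝ) : ℝ := x ^ q * (x + 1) ^ q * x ^ (-s)

def layerResistance (q : ℕ) (s x : ℝ) : ℝ := x ^ (-s) / (x ^ q * (x + 1) ^ q)

def volumeResistanceProduct (a b : ℝ → ℝ) (n : ℕ) : ℝ≥0∞ :=
  (∑ k ∈ range (n + 1), ENNReal.ofReal (a ((k : ℝ) + 1))) *
    ∑' j : ℕ, ENNReal.ofReal (b ((n : ℝ) + (j : ℝ) + 1))

theorem tsum_ofReal_inv_mul_add_one_le (n : ℕ) :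
    ∑' j : ℕ, ENNReal.ofReal (((n : ℝ) + j + 1) * ((n : ℝ) + j + 1 + 1))⁻¹ ≤
      ENNReal.ofReal ((n : ℝ) + 1)⁻¹ := by
  refine ENNReal.tsum_le_of_sum_range_le fun N => ?_
  rw [← ENNReal.ofReal_sum_of_nonneg fun j _ => by positivity]
  refine ENNReal.ofReal_le_ofReal ?_
  set g : ℕ → ℝ := fun j => ((n : ℝ) + j + 1)⁻¹
  calc ∑ j ∈ range N, (((n : ℝ) + j + 1) * ((n : ℝ) + j + 1 + 1))⁻¹
      = ∑ j ∈ range N, (g j - g (j + 1)) := by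
        refine sum_congr rfl fun j _ => ?_
        simp only [g, Nat.cast_add_one]
        field_simp
        ring
    _ = g 0 - g N := sum_range_sub' g N
    _ ≤ g 0 := sub_le_self _ (by positivity)
    _ = ((n : ℝ) + 1)⁻¹ := by simp [g]

section VolumeResistanceProduct

variable {a b : ℝ → ℝ}

theorem volumeResistanceProduct_eq_sum_tsum (ha : ∀ x, 1 ≤ x → 0 ≤ a x) (n : ℕ) :
    volumeResistanceProduct a b n =
      ∑ k ∈ range (n + 1), ∑' j : ℕ,
        ENNReal.ofReal (a ((k : ℝ) + 1) * b ((n : ℝ) + (j : ℝ) + 1)) := by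
  rw [volumeResistanceProduct, sum_mul]
  refine sum_congr rfl fun k _ => ?_
  rw [← ENNReal.tsum_mul_left]
  refine tsum_congr fun j => ?_
  rw [ENNReal.ofReal_mul (ha _ (le_add_of_nonneg_left k.cast_nonneg))]

theorem volumeResistanceProduct_le {C : ℝ} (ha : ∀ x, 1 ≤ x → 0 ≤ a x)
    (hab : ∀ x y, 1 ≤ x → x ≤ y → a x * b y ≤ C / (y * (y + 1))) (n : ℕ) :
    volumeResistanceProduct a b n ≤ ENNReal.ofReal C := by
  have hterm : ∀ k ∈ range (n + 1), ∀ j : ℕ,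
      ENNReal.ofReal (a ((k : ℝ) + 1) * b ((n : ℝ) + (j : ℝ) + 1)) ≤
        ENNReal.ofReal C * ENNReal.ofReal (((n : ℝ) + j + 1) * ((n : ℝ) + j + 1 + 1))⁻¹ := by
    intro k hk j
    have hkn : (k : ℝ) ≤ n := by exact_mod_cast Nat.lt_succ_iff.mp (mem_range.mp hk)
    rw [← ENNReal.ofReal_mul' (by positivity), ← div_eq_mul_inv]
    exact ENNReal.ofReal_le_ofReal
      (hab _ _ (le_add_of_nonneg_left k.cast_nonneg) (by linarith [Nat.cast_nonneg (α := ℝ) j]))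
  have hcancel : ((n + 1 : ℕ) : ℝ≥0∞) * ENNReal.ofReal ((n : ℝ) + 1)⁻¹ = 1 := by
    rw [ENNReal.ofReal_inv_of_pos (by positivity), ← Nat.cast_add_one, ENNReal.ofReal_natCast,
      ENNReal.mul_inv_cancel (by simp) (by simp)]
  calc volumeResistanceProduct a b n
      ≤ ∑ k ∈ range (n + 1), ∑' j : ℕ,
          ENNReal.ofReal C * ENNReal.ofReal (((n : ℝ) + j + 1) * ((n : ℝ) + j + 1 + 1))⁻¹ := by
        rw [volumeResistanceProduct_eq_sum_tsum ha]
        exact sum_le_sum fun k hk => ENNReal.tsum_le_tsum (hterm k hk)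
    _ ≤ ((n + 1 : ℕ) : ℝ≥0∞) * (ENNReal.ofReal C * ENNReal.ofReal ((n : ℝ) + 1)⁻¹) := by
        rw [sum_const, card_range, nsmul_eq_mul, ENNReal.tsum_mul_left]
        gcongr
        exact tsum_ofReal_inv_mul_add_one_le n
    _ = ENNReal.ofReal C := by rw [mul_left_comm, hcancel, mul_one]

theorem le_volumeResistanceProduct_two_mul {c : ℝ} (ha : ∀ x, 1 ≤ x → 0 ≤ a x) (n : ℕ)
    (hab : ∀ x y, (n : ℝ) + 1 ≤ x → x ≤ y → y ≤ 3 * ((n : ℝ) + 1) → c ≤ a x * b y) :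
    ENNReal.ofReal (((n : ℝ) + 1) ^ 2 * c) ≤ volumeResistanceProduct a b (2 * n) := by
  have hsub : Icc n (2 * n) ⊆ range (2 * n + 1) := fun k hk => by
    rw [mem_Icc] at hk
    rw [mem_range]
    omega
  have hcard : #(Icc n (2 * n)) = n + 1 := by rw [Nat.card_Icc]; omega
  rw [volumeResistanceProduct_eq_sum_tsum ha]
  calc ENNReal.ofReal (((n : ℝ) + 1) ^ 2 * c)
      = ∑ k ∈ Icc n (2 * n), ∑ j ∈ range (n + 1), ENNReal.ofReal c := by
        rw [sum_const, sum_const, hcard, card_range, ENNReal.ofReal_mul (by positivity),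
          nsmul_eq_mul, nsmul_eq_mul, ← mul_assoc, ← Nat.cast_mul, ← sq,
          ← ENNReal.ofReal_natCast, Nat.cast_pow, Nat.cast_add_one]
    _ ≤ ∑ k ∈ Icc n (2 * n), ∑ j ∈ range (n + 1),
          ENNReal.ofReal (a ((k : ℝ) + 1) * b (((2 * n : ℕ) : ℝ) + (j : ℝ) + 1)) := by
        gcongr with k hk j hj
        rw [mem_Icc] at hk
        rw [mem_range] at hj
        have hk₁ : (n : ℝ) ≤ k := by exact_mod_cast hk.1
        have hk₂ : (k : ℝ) ≤ 2 * n := by exact_mod_cast hk.2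
        have hj' : (j : ℝ) ≤ n := by exact_mod_cast Nat.lt_succ_iff.mp hj
        refine hab _ _ (by linarith) ?_ ?_ <;> push_cast <;> linarith [Nat.cast_nonneg (α := ℝ) j]
    _ ≤ ∑ k ∈ Icc n (2 * n), ∑' j : ℕ,
          ENNReal.ofReal (a ((k : ℝ) + 1) * b (((2 * n : ℕ) : ℝ) + (j : ℝ) + 1)) :=
        sum_le_sum fun k _ => ENNReal.sum_le_tsum _
    _ ≤ _ := sum_le_sum_of_subset hsub

end VolumeResistanceProduct

section Layers

variable {q : ℕ} {s x y : ℝ}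

theorem layerVolume_nonneg (hx : 0 ≤ x) : 0 ≤ layerVolume q s x :=
  mul_nonneg (mul_nonneg (pow_nonneg hx q) (pow_nonneg (by linarith) q)) (Real.rpow_nonneg hx _)

theorem layerVolume_mul_layerResistance (hx : 0 < x) (hy : 0 < y) :
    layerVolume q s x * layerResistance q s y =
      (x * (x + 1) / (y * (y + 1))) ^ q * (x * y) ^ (-s) := by
  rw [layerVolume, layerResistance, Real.mul_rpow hx.le hy.le, div_pow, mul_pow, mul_pow]
  field_simp

theorem layerVolume_mul_layerResistance_le (hq : q ≠ 0) (hs : 1 ≤ s) (hx : 1 ≤ x) (hxy : x ≤ y) :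
    layerVolume q s x * layerResistance q s y ≤ 2 / (y * (y + 1)) := by
  have hy : 1 ≤ y := hx.trans hxy
  have hr₀ : 0 ≤ x * (x + 1) / (y * (y + 1)) := by positivity
  have hr₁ : x * (x + 1) / (y * (y + 1)) ≤ 1 :=
    (div_le_one (by positivity)).mpr (mul_le_mul hxy (by linarith) (by linarith) (by linarith))
  rw [layerVolume_mul_layerResistance (by linarith) (by linarith)]
  calc (x * (x + 1) / (y * (y + 1))) ^ q * (x * y) ^ (-s)
      ≤ (x * (x + 1) / (y * (y + 1))) * (x * y) ^ (-1 : ℝ) :=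
        mul_le_mul (pow_le_of_le_one hr₀ hr₁ hq)
          (Real.rpow_le_rpow_of_exponent_le (one_le_mul_of_one_le_of_one_le hx hy) (by linarith))
          (by positivity) hr₀
    _ = (x + 1) / (y * (y + 1) * y) := by
        rw [Real.rpow_neg_one]
        field_simp
    _ ≤ 2 * y / (y * (y + 1) * y) := by gcongr; linarith
    _ = 2 / (y * (y + 1)) := by field_simp

theorem le_layerVolume_mul_layerResistance {t : ℝ} (hs : 0 ≤ s) (ht : 0 < t) (htx : t ≤ x)
    (hxy : x ≤ y) (hyt : y ≤ 3 * t) :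
    (9 ^ q)⁻¹ * (9 * t ^ 2) ^ (-s) ≤ layerVolume q s x * layerResistance q s y := by
  have hx : 0 < x := ht.trans_le htx
  have hy : 0 < y := hx.trans_le hxy
  have hr : 1 / 9 ≤ x * (x + 1) / (y * (y + 1)) := by
    rw [div_le_div_iff₀ (by norm_num) (by positivity)]
    nlinarith
  rw [layerVolume_mul_layerResistance hx hy, ← inv_pow, ← one_div]
  exact mul_le_mul (pow_le_pow_left₀ (by norm_num) hr q)
    (Real.rpow_le_rpow_of_nonpos (by positivity) (by nlinarith) (by linarith))
    (by positivity) (by positivity)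

theorem volumeResistanceProduct_layer_le_two (hq : q ≠ 0) (hs : 1 ≤ s) (n : ℕ) :
    volumeResistanceProduct (layerVolume q s) (layerResistance q s) n ≤ ENNReal.ofReal 2 :=
  volumeResistanceProduct_le (fun _ hx => layerVolume_nonneg (by linarith))
    (fun _ _ hx hxy => layerVolume_mul_layerResistance_le hq hs hx hxy) n

theorem iSup_volumeResistanceProduct_layer_eq_top (hs₀ : 0 ≤ s) (hs : s < 1) :
    ⨆ n, volumeResistanceProduct (layerVolume q s) (layerResistance q s) n = ∞ := by
  set f : ℕ → ℝ := fun n => ((n : ℝ) + 1) ^ 2 * ((9 ^ q)⁻¹ * (9 * ((n : ℝ) + 1) ^ 2) ^ (-s))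
  have hf_eq : ∀ n, f n = (9 ^ q * 9)⁻¹ * (9 * ((n : ℝ) + 1) ^ 2) ^ (1 - s) := fun n => by
    have hu : 0 < 9 * ((n : ℝ) + 1) ^ 2 := by positivity
    simp only [f]
    rw [Real.rpow_sub hu, Real.rpow_one, Real.rpow_neg hu.le]
    field_simp
  have hf : Tendsto f atTop atTop := by
    rw [tendsto_congr hf_eq]
    refine Tendsto.const_mul_atTop (by positivity) ((tendsto_rpow_atTop (by linarith)).comp ?_)
    refine tendsto_atTop_mono (fun n => ?_) tendsto_natCast_atTop_atTop
    nlinarith [Nat.cast_nonneg (α := ℝ) n]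
  have hle : ∀ n, ENNReal.ofReal (f n) ≤
      ⨆ n, volumeResistanceProduct (layerVolume q s) (layerResistance q s) n := fun n =>
    le_iSup_of_le (2 * n) <|
      le_volumeResistanceProduct_two_mul (fun _ hx => layerVolume_nonneg (by linarith)) n
        fun _ _ htx hxy hyt => le_layerVolume_mul_layerResistance hs₀ (by positivity) htx hxy hyt
  exact top_le_iff.mp (le_of_tendsto' (ENNReal.tendsto_ofReal_atTop.comp hf) hle)

end Layers

end

theorem polynomial_antitree_positive_iff_general (q : ℕ) (hq : 1 ≤ q)
    (s : ℝ) (hs0 : 0 ≤ s) :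
    (⨆ n : ℕ,
        (∑ k ∈ Finset.range (n + 1),
            ENNReal.ofReal
              (((k : ℝ) + 1) ^ q * ((k : ℝ) + 2) ^ q * ((k : ℝ) + 1) ^ (-s))) *
          ∑' k : ℕ,
            ENNReal.ofReal
              (((n : ℝ) + (k : ℝ) + 1) ^ (-s) /
                (((n : ℝ) + (k : ℝ) + 1) ^ q * ((n : ℝ) + (k : ℝ) + 2) ^ q))) < ∞ ↔
      1 ≤ s := by
  have hF : ∀ n : ℕ, volumeResistanceProduct (layerVolume q s) (layerResistance q s) n =
      (∑ k ∈ Finset.range (n + 1),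
          ENNReal.ofReal (((k : ℝ) + 1) ^ q * ((k : ℝ) + 2) ^ q * ((k : ℝ) + 1) ^ (-s))) *
        ∑' k : ℕ, ENNReal.ofReal (((n : ℝ) + (k : ℝ) + 1) ^ (-s) /
          (((n : ℝ) + (k : ℝ) + 1) ^ q * ((n : ℝ) + (k : ℝ) + 2) ^ q)) := fun n => by
    simp only [volumeResistanceProduct, layerVolume, layerResistance, add_assoc, one_add_one_eq_two]
  simp only [← hF]
  constructor
  · intro hfin
    by_contra! hs
    exact hfin.ne (iSup_volumeResistanceProduct_layer_eq_top hs0 hs)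
  · intro hs
    exact (iSup_le (volumeResistanceProduct_layer_le_two (by omega) hs)).trans_lt
      ENNReal.ofReal_lt_top

/-- Corollary 10.6(iii).  For the antitree `A^q` with
`sₙ = (n+1)^q` and `ℓₖ = (k+1)^{−s}`, `0 ≤ s ≤ 2q+1`:
`sup_n (Σ_{k ≤ n} (k+1)^q (k+2)^q (k+1)^{−s})(Σ_{k ≥ n} (k+1)^{−s}/((k+1)^q(k+2)^q)) < ∞`
iff `s ≥ 1`. -/
theorem polynomial_antitree_positive_iff (q : ℕ) (hq : 1 ≤ q)
    (s : ℝ) (hs0 : 0 ≤ s) (hs1 : s ≤ 2 * (q : ℝ) + 1) :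
    (⨆ n : ℕ,
        (∑ k ∈ Finset.range (n + 1),
            ENNReal.ofReal
              (((k : ℝ) + 1) ^ q * ((k : ℝ) + 2) ^ q * ((k : ℝ) + 1) ^ (-s))) *
          ∑' k : ℕ,
            ENNReal.ofReal
              (((n : ℝ) + (k : ℝ) + 1) ^ (-s) /
                (((n : ℝ) + (k : ℝ) + 1) ^ q * ((n : ℝ) + (k : ℝ) + 2) ^ q))) < ∞ ↔
      1 ≤ s :=
  polynomial_antitree_positive_iff_general q hq s hs0
end
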